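/- Let F be a non-empty nested collection of open discs in ℂ with bounded radii. Then there exists a nested increasing sequence (D_n) of discs in F such that the union of the D_n equals the union of F, and the radius of the union equals the limit of the radii r(D_n). -/

import Mathlib

/-- An open disc in the complex plane: a set of the form `B(z,r)` with `r > 0`. -/
def IsOpenDisc (D : Set ℂ) : Prop := ∃ z : ℂ, ∃ r : ℝ, 0 < r ∧ D = Metric.ball z r

/-- The radius of a disc, computed as half its diameter (so `r = 0` for `∅` or singletons). -/
noncomputable def discRadius (D : Set ℂ) : ℝ := Metric.diam D / 2

open Metric Set Filter Topology Bornology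

/-!
Any two points of `⋃₀ F` lie in a common disc of the chain, so the radius of `⋃₀ F` is the
supremum of the radii. Take discs of `F` whose radii tend to this supremum and replace each by
the largest of the first few (possible since `F` is a chain). A disc `B(z, r)` of `F` that is
contained in no `D n` contains all of them, and discs `B(c, ρ) ⊆ B(z, r)` satisfy
`|c - z| + ρ ≤ r`; as their radii tend to a limit `≥ r`, they exhaust `B(z, r)`.
-/

theorem IsChain.exists_monotone_seq_ge {α : Type*} [Preorder α] {F : Set α}
    (hF : IsChain (· ≤ ·) F) {E : ℕ → α} (hE : ∀ n, E n ∈ F) :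
    ∃ D : ℕ → α, Monotone D ∧ (∀ n, D n ∈ F) ∧ ∀ n, E n ≤ D n := by
  have hdir : Directed (· ≤ ·) E :=
    directedOn_range.1 (hF.mono (range_subset_iff.2 hE)).directedOn
  exact ⟨fun n => E (hdir.sequence E (n + 1)), fun m n hmn => hdir.sequence_mono (by omega),
    fun n => hE _, fun n => hdir.le_sequence n⟩

theorem IsChain.dist_le_of_mem_sUnion {α : Type*} [PseudoMetricSpace α] {F : Set (Set α)}
    (hF : IsChain (· ⊆ ·) F) (hb : ∀ A ∈ F, IsBounded A) {C : ℝ} (hC : ∀ A ∈ F, diam A ≤ C)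
    {x y : α} (hx : x ∈ ⋃₀ F) (hy : y ∈ ⋃₀ F) : dist x y ≤ C := by
  obtain ⟨A, hA, hxA⟩ := hx
  obtain ⟨B, hB, hyB⟩ := hy
  rcases hF.total hA hB with hAB | hBA
  · exact (dist_le_diam_of_mem (hb B hB) (hAB hxA) hyB).trans (hC B hB)
  · exact (dist_le_diam_of_mem (hb A hA) hxA (hBA hyB)).trans (hC A hA)

section NormedSpace

variable {E : Type*} [NormedAddCommGroup E] [NormedSpace ℝ E] [Nontrivial E]

theorem exists_norm_eq_one_sameRay (v : E) : ∃ u : E, ‖u‖ = 1 ∧ SameRay ℝ v u := by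
  rcases eq_or_ne v 0 with rfl | hv
  · obtain ⟨u, hu⟩ := exists_norm_eq E zero_le_one
    exact ⟨u, hu, SameRay.zero_left u⟩
  · exact ⟨‖v‖⁻¹ • v, norm_smul_inv_norm hv,
      SameRay.sameRay_pos_smul_right v (inv_pos.2 (norm_pos_iff.2 hv))⟩

theorem dist_add_le_of_ball_subset_ball {c z : E} {ρ r : ℝ} (hρ : 0 < ρ)
    (h : ball c ρ ⊆ ball z r) : dist c z + ρ ≤ r := by
  by_contra! hlt
  have hcz : dist c z < r := h (mem_ball_self hρ)
  obtain ⟨u, hu, hray⟩ := exists_norm_eq_one_sameRay (c - z)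
  set t := r - dist c z
  have ht : 0 ≤ t := by linarith
  have hmem : c + t • u ∈ ball c ρ := by
    rw [mem_ball, dist_eq_norm, add_sub_cancel_left, norm_smul, hu, Real.norm_of_nonneg ht]
    linarith
  -- `c - z` and `u` point the same way, so moving from `c` along `u` moves away from `z`.
  have hfar : dist (c + t • u) z = r := by
    rw [dist_eq_norm, show c + t • u - z = (c - z) + t • u by abel,
      (hray.nonneg_smul_right ht).norm_add, norm_smul, hu, Real.norm_of_nonneg ht, ← dist_eq_norm]
    ring
  exact (mem_ball.1 (h hmem)).ne hfar

theorem ball_subset_iUnion_of_tendsto {z : E} {r s : ℝ} {c : ℕ → E} {ρ : ℕ → ℝ}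
    (hρ : ∀ n, 0 < ρ n) (hsub : ∀ n, ball (c n) (ρ n) ⊆ ball z r)
    (hlim : Tendsto ρ atTop (𝓝 s)) (hrs : r ≤ s) : ball z r ⊆ ⋃ n, ball (c n) (ρ n) := by
  intro x hx
  have hxz : dist x z + r < 2 * s := by linarith [mem_ball.1 hx]
  obtain ⟨n, hn⟩ := ((hlim.const_mul 2).eventually (eventually_gt_nhds hxz)).exists
  refine mem_iUnion.2 ⟨n, mem_ball.2 ?_⟩
  calc dist x (c n) ≤ dist x z + dist (c n) z := dist_triangle_right _ _ _
    _ ≤ dist x z + (r - ρ n) := by linarith [dist_add_le_of_ball_subset_ball (hρ n) (hsub n)]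
    _ < ρ n := by linarith

end NormedSpace

theorem discRadius_ball (z : ℂ) {r : ℝ} (hr : 0 ≤ r) : discRadius (ball z r) = r := by
  rw [discRadius, diam_ball_eq z hr]
  ring

theorem IsOpenDisc.isBounded {A : Set ℂ} (hA : IsOpenDisc A) : IsBounded A := by
  obtain ⟨z, r, -, rfl⟩ := hA
  exact isBounded_ball

theorem discRadius_mono {A B : Set ℂ} (hB : IsBounded B) (h : A ⊆ B) :
    discRadius A ≤ discRadius B :=
  div_le_div_of_nonneg_right (diam_mono h hB) zero_le_two

theorem isLUB_discRadius_sUnion {F : Set (Set ℂ)} (hF : IsChain (· ⊆ ·) F) (hne : F.Nonempty)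
    (hb : ∀ A ∈ F, IsBounded A) (hbdd : BddAbove (discRadius '' F)) :
    IsLUB (discRadius '' F) (discRadius (⋃₀ F)) := by
  have hdist : ∀ C ∈ upperBounds (discRadius '' F), ∀ x ∈ ⋃₀ F, ∀ y ∈ ⋃₀ F,
      dist x y ≤ 2 * C := fun C hC x hx y hy =>
    hF.dist_le_of_mem_sUnion hb (fun A hA => by
      have := hC (mem_image_of_mem _ hA)
      rw [discRadius] at this
      linarith) hx hy
  obtain ⟨C, hC⟩ := hbdd
  refine ⟨?_, fun C' hC' => ?_⟩
  · rintro _ ⟨A, hA, rfl⟩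
    exact discRadius_mono (isBounded_iff.2 ⟨_, hdist C hC⟩) (subset_sUnion_of_mem hA)
  · obtain ⟨A, hA⟩ := hne
    have hC'0 : 0 ≤ C' := (div_nonneg diam_nonneg zero_le_two).trans (hC' (mem_image_of_mem _ hA))
    rw [discRadius, div_le_iff₀ two_pos, mul_comm]
    exact diam_le_of_forall_dist_le (by positivity) (hdist C' hC')

theorem IsOpenDisc.subset_iUnion_of_tendsto {A : Set ℂ} (hA : IsOpenDisc A) {D : ℕ → Set ℂ}
    (hD : ∀ n, IsOpenDisc (D n)) (hDA : ∀ n, D n ⊆ A) {s : ℝ}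
    (hlim : Tendsto (fun n => discRadius (D n)) atTop (𝓝 s)) (hAs : discRadius A ≤ s) :
    A ⊆ ⋃ n, D n := by
  obtain ⟨z, r, hr, rfl⟩ := hA
  choose c ρ hρ hDeq using hD
  simp only [hDeq, discRadius_ball _ (hρ _).le] at hDA hlim ⊢
  rw [discRadius_ball z hr.le] at hAs
  exact ball_subset_iUnion_of_tendsto hρ hDA hlim hAs

theorem exists_increasing_sequence_of_nested_open_discs (F : Set (Set ℂ)) (hne : F.Nonempty)
    (hchain : IsChain (· ⊆ ·) F) (hdisc : ∀ D ∈ F, IsOpenDisc D)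
    (hbdd : BddAbove (discRadius '' F)) :
    ∃ D : ℕ → Set ℂ, (∀ n, D n ∈ F) ∧ (∀ n, D n ⊆ D (n + 1)) ∧
      (⋃ n, D n) = ⋃₀ F ∧
      Filter.Tendsto (fun n => discRadius (D n)) Filter.atTop (nhds (discRadius (⋃₀ F))) := by
  have hb : ∀ A ∈ F, IsBounded A := fun A hA => (hdisc A hA).isBounded
  have hlub := isLUB_discRadius_sUnion hchain hne hb hbdd
  obtain ⟨u, -, -, hu, huF⟩ := hlub.exists_seq_monotone_tendsto (hne.image _)
  choose E hEF hEu using huF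
  obtain ⟨D, hDmono, hDF, hED⟩ := hchain.exists_monotone_seq_ge hEF
  have hlim : Tendsto (fun n => discRadius (D n)) atTop (𝓝 (discRadius (⋃₀ F))) :=
    tendsto_of_tendsto_of_tendsto_of_le_of_le hu tendsto_const_nhds
      (fun n => hEu n ▸ discRadius_mono (hb _ (hDF n)) (hED n))
      (fun n => hlub.1 (mem_image_of_mem _ (hDF n)))
  refine ⟨D, hDF, fun n => hDmono n.le_succ,
    (iUnion_subset fun n => subset_sUnion_of_mem (hDF n)).antisymm ?_, hlim⟩
  rintro x ⟨A, hA, hxA⟩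
  by_cases hAD : ∃ n, A ⊆ D n
  · obtain ⟨n, hn⟩ := hAD
    exact mem_iUnion.2 ⟨n, hn hxA⟩
  · have hDA : ∀ n, D n ⊆ A := fun n =>
      (hchain.total hA (hDF n)).resolve_left (not_exists.1 hAD n)
    exact (hdisc A hA).subset_iUnion_of_tendsto (fun n => hdisc _ (hDF n)) hDA hlim
      (hlub.1 (mem_image_of_mem _ hA)) hxA
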